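/- arXiv:1703.06482 — 3 statements merged into one kernel-verified Lean document; each statement's English description precedes it below -/
import Mathlib

section
/- For every integer n ≥ 1, every resolving set in G_n for the set B = {b_y : y ∈ W_n} has at least 2^n − 1 elements. -/
/-- `L n`: binary words of length at most `n` that are empty or end in `1` (`true`). -/
abbrev Ln (n : ℕ) := {x : List Bool // x.length ≤ n ∧ (x = [] ∨ x.getLast? = some true)}

/-- `W n`: binary words of length exactly `n`. -/
abbrev Wn (n : ℕ) := {y : List Bool // y.length = n}

/-- Vertex set of the graph `G_n`: a copy of `L n` (the `a` vertices), two copies of `W n`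
(the `b` and `c` vertices) and another copy of `L n` (the `d` vertices). -/
abbrev VGn (n : ℕ) := Ln n ⊕ Wn n ⊕ Wn n ⊕ Ln n

def va {n : ℕ} (x : Ln n) : VGn n := Sum.inl x
def vb {n : ℕ} (y : Wn n) : VGn n := Sum.inr (Sum.inl y)
def vc {n : ℕ} (y : Wn n) : VGn n := Sum.inr (Sum.inr (Sum.inl y))
def vd {n : ℕ} (x : Ln n) : VGn n := Sum.inr (Sum.inr (Sum.inr x))

/-- The graph `G_n`: edges `b_y c_z` for all `y, z ∈ W n`, `a_x b_y` whenever `x` is a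
prefix of `y`, and `d_x c_y` whenever `x` is a prefix of `y`. -/
def Gn (n : ℕ) : SimpleGraph (VGn n) where
  Adj u v :=
    match u, v with
    | Sum.inl x, Sum.inr (Sum.inl y) => x.1 <+: y.1
    | Sum.inr (Sum.inl y), Sum.inl x => x.1 <+: y.1
    | Sum.inr (Sum.inl _), Sum.inr (Sum.inr (Sum.inl _)) => True
    | Sum.inr (Sum.inr (Sum.inl _)), Sum.inr (Sum.inl _) => True
    | Sum.inr (Sum.inr (Sum.inl y)), Sum.inr (Sum.inr (Sum.inr x)) => x.1 <+: y.1
    | Sum.inr (Sum.inr (Sum.inr x)), Sum.inr (Sum.inr (Sum.inl y)) => x.1 <+: y.1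
    | _, _ => False
  symm := by
    constructor
    rintro (x | y | z | w) (x' | y' | z' | w') h <;> exact h
  loopless := by
    constructor
    rintro (x | y | z | w) h <;> exact h

/-!
Seen from `b_y`, the vertex `a_x` is at distance `1` or `3` according as `x` is a prefix of `y`,
`b_w` is at distance `0` or `2` according as `w = y`, and every `c`- or `d`-vertex is at the
fixed distance `1` or `2`. So a vertex `s` tells `b_y` from `b_z` only when exactly one of `y, z`
lies in a set `bTrace s` (a prefix cylinder, a singleton, or empty). These sets form a laminar
family, and a laminar family separating `N` points has at least `N - 1` members.
-/

section Laminar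

variable {α : Type*}

def IsLaminar (F : Set (Set α)) : Prop :=
  ∀ A ∈ F, ∀ B ∈ F, A ⊆ B ∨ B ⊆ A ∨ Disjoint A B

def IsSeparating (F : Set (Set α)) (P : Set α) : Prop :=
  ∀ u ∈ P, ∀ v ∈ P, u ≠ v → ∃ A ∈ F, ¬(u ∈ A ↔ v ∈ A)

theorem Set.Subsingleton.subset_or_disjoint {A : Set α} (hA : A.Subsingleton) (B : Set α) :
    A ⊆ B ∨ Disjoint A B := by
  rcases hA.eq_empty_or_singleton with rfl | ⟨a, rfl⟩
  · exact .inl (Set.empty_subset B)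
  · by_cases ha : a ∈ B
    exacts [.inl (Set.singleton_subset_iff.mpr ha), .inr (Set.disjoint_singleton_left.mpr ha)]

variable {F : Set (Set α)} {P : Set α}

theorem IsLaminar.mono {G : Set (Set α)} (hF : IsLaminar F) (hGF : G ⊆ F) : IsLaminar G :=
  fun A hA B hB => hF A (hGF hA) B (hGF hB)

theorem IsSeparating.sdiff (hsep : IsSeparating F P) (A : Set α) :
    IsSeparating (F \ {A}) (P \ A) := by
  rintro u ⟨hu, huA⟩ v ⟨hv, hvA⟩ huv
  obtain ⟨B, hB, huvB⟩ := hsep u hu v hv huv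
  refine ⟨B, ⟨hB, ?_⟩, huvB⟩
  rintro rfl
  exact huvB (iff_of_false huA hvA)

theorem IsLaminar.subsingleton_inter_of_minimal (hlam : IsLaminar F) (hsep : IsSeparating F P)
    {A : Set α} (hA : Minimal (· ∈ F) A) : (P ∩ A).Subsingleton := by
  rintro u ⟨hu, huA⟩ v ⟨hv, hvA⟩
  by_contra huv
  obtain ⟨B, hB, huvB⟩ := hsep u hu v hv huv
  have hAB : A ⊆ B ∨ Disjoint A B := by
    rcases hlam A hA.prop B hB with h | h | h
    exacts [.inl h, .inl (hA.le_of_le hB h), .inr h]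
  rcases hAB with h | h
  · exact huvB (iff_of_true (h huA) (h hvA))
  · exact huvB (iff_of_false (h.notMem_of_mem_left huA) (h.notMem_of_mem_left hvA))

/-- Removing an inclusion-minimal member `A` leaves a family separating `P \ A`, while `P ∩ A`
has at most one point. -/
theorem IsLaminar.ncard_le_ncard_add_one (hlam : IsLaminar F) (hF : F.Finite) (hP : P.Finite)
    (hsep : IsSeparating F P) : P.ncard ≤ F.ncard + 1 := by
  induction h : F.ncard generalizing F P with
  | zero =>
    obtain rfl : F = ∅ := (Set.ncard_eq_zero hF).mp h
    refine (Set.ncard_le_one hP).mpr fun u hu v hv => by_contra fun huv => ?_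
    obtain ⟨A, hA, -⟩ := hsep u hu v hv huv
    exact hA
  | succ m ih =>
    obtain ⟨A, hA⟩ := hF.exists_minimal (Set.nonempty_of_ncard_ne_zero (by omega))
    have hinter : (P ∩ A).ncard ≤ 1 :=
      (Set.ncard_le_one (hP.inter_of_left A)).mpr (hlam.subsingleton_inter_of_minimal hsep hA)
    have hsdiff : (P \ A).ncard ≤ m + 1 :=
      ih (hlam.mono Set.sdiff_subset) hF.sdiff hP.sdiff (hsep.sdiff A)
        (by rw [Set.ncard_sdiff_singleton_of_mem hA.prop, h, Nat.add_sub_cancel])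
    rw [← Set.ncard_inter_add_ncard_sdiff_eq_ncard P A hP]
    omega

end Laminar

namespace SimpleGraph

variable {V : Type*} {G : SimpleGraph V} {u v w : V}

theorem dist_eq_two_of_adj_of_adj (hne : u ≠ v) (hnadj : ¬G.Adj u v) (huw : G.Adj u w)
    (hwv : G.Adj w v) : G.dist u v = 2 := by
  rw [dist, edist_eq_two_iff.mpr ⟨hne, hnadj, w, huw, hwv.symm⟩]
  rfl

theorem dist_eq_three_of_adj_of_adj_of_adj {w₁ w₂ : V} (hnadj : ¬G.Adj u v)
    (hcommon : ∀ w, G.Adj u w → ¬G.Adj w v) (h₁ : G.Adj u w₁) (h₂ : G.Adj w₁ w₂)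
    (h₃ : G.Adj w₂ v) : G.dist u v = 3 := by
  have hne : u ≠ v := by
    rintro rfl
    exact hcommon w₁ h₁ h₁.symm
  have hlt : 2 < G.edist u v :=
    two_lt_edist_iff.mpr ⟨hne, hnadj, Set.eq_empty_of_forall_notMem fun w hw =>
      hcommon w hw.1 hw.2.symm⟩
  have hle : G.edist u v ≤ 3 := (Walk.cons h₁ (.cons h₂ (.cons h₃ .nil))).edist_le
  have hedist : G.edist u v = 3 := le_antisymm hle (Order.add_one_le_of_lt hlt)
  rw [dist, hedist]
  rfl

end SimpleGraph

namespace Gn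

open SimpleGraph

variable {n : ℕ}

instance : Finite (Ln n) :=
  have := (List.finite_length_le Bool n).to_subtype
  Finite.of_injective (fun x : Ln n => (⟨x.1, x.2.1⟩ : {l : List Bool | l.length ≤ n}))
    fun _ _ h => Subtype.ext (congrArg Subtype.val h :)

instance : Finite (Wn n) := inferInstanceAs (Finite (List.Vector Bool n))

theorem card_Wn : Nat.card (Wn n) = 2 ^ n := by
  change Nat.card (List.Vector Bool n) = 2 ^ n
  rw [Nat.card_eq_fintype_card, card_vector, Fintype.card_bool]

def pad (x : Ln n) : Wn n :=
  ⟨x.1.rightpad n false, by rw [List.length_rightpad]; exact max_eq_left x.2.1⟩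

theorem prefix_pad (x : Ln n) : x.1 <+: (pad x).1 := List.prefix_append _ _

theorem dist_vb_vc (y z : Wn n) : (Gn n).dist (vb y) (vc z) = 1 :=
  dist_eq_one_iff_adj.mpr trivial

theorem dist_vb_vd (y : Wn n) (x : Ln n) : (Gn n).dist (vb y) (vd x) = 2 :=
  dist_eq_two_of_adj_of_adj (w := vc (pad x)) (by simp [vb, vd]) id trivial (prefix_pad x)

theorem dist_vb_vb (y z : Wn n) : (Gn n).dist (vb y) (vb z) = if y = z then 0 else 2 := by
  split_ifs with h
  · rw [h, dist_self]
  · exact dist_eq_two_of_adj_of_adj (w := vc y) (by simpa [vb] using h) id trivial trivial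

theorem dist_vb_va (y : Wn n) (x : Ln n) :
    (Gn n).dist (vb y) (va x) = if x.1 <+: y.1 then 1 else 3 := by
  split_ifs with h
  · exact dist_eq_one_iff_adj.mpr h
  · refine dist_eq_three_of_adj_of_adj_of_adj (w₁ := vc (pad x)) (w₂ := vb (pad x)) h ?_
      trivial trivial (prefix_pad x)
    -- the neighbours of `b_y` are `a`- and `c`-vertices, and none of these is adjacent to `a_x`
    rintro (_ | _ | _ | _) h₁ h₂ <;> first | exact h₁.elim | exact h₂.elim

def bTrace : VGn n → Set (Wn n)
  | Sum.inl x => {y | x.1 <+: y.1}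
  | Sum.inr (Sum.inl w) => {w}
  | _ => ∅

theorem dist_vb_eq_of_mem_bTrace_iff {y z : Wn n} (s : VGn n)
    (h : y ∈ bTrace s ↔ z ∈ bTrace s) : (Gn n).dist (vb y) s = (Gn n).dist (vb z) s := by
  rcases s with x | w | w | x
  · show (Gn n).dist (vb y) (va x) = (Gn n).dist (vb z) (va x)
    rw [dist_vb_va, dist_vb_va]
    exact if_congr h rfl rfl
  · show (Gn n).dist (vb y) (vb w) = (Gn n).dist (vb z) (vb w)
    rw [dist_vb_vb, dist_vb_vb]
    exact if_congr h rfl rfl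
  · exact (dist_vb_vc y w).trans (dist_vb_vc z w).symm
  · exact (dist_vb_vd y x).trans (dist_vb_vd z x).symm

theorem bTrace_subsingleton_or_eq_setOf_prefix (s : VGn n) :
    (bTrace s).Subsingleton ∨ ∃ x : List Bool, bTrace s = {y | x <+: y.1} := by
  rcases s with x | w | _ | _
  exacts [.inr ⟨x.1, rfl⟩, .inl Set.subsingleton_singleton, .inl Set.subsingleton_empty,
    .inl Set.subsingleton_empty]

theorem setOf_prefix_nested (x x' : List Bool) :
    {y : Wn n | x <+: y.1} ⊆ {y | x' <+: y.1} ∨ {y : Wn n | x' <+: y.1} ⊆ {y | x <+: y.1} ∨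
      Disjoint {y : Wn n | x <+: y.1} {y | x' <+: y.1} := by
  by_cases hd : Disjoint {y : Wn n | x <+: y.1} {y | x' <+: y.1}
  · exact .inr (.inr hd)
  obtain ⟨y, hx, hx'⟩ := Set.not_disjoint_iff.mp hd
  rcases List.prefix_or_prefix_of_prefix hx hx' with h | h
  · exact .inr (.inl fun z hz => h.trans hz)
  · exact .inl fun z hz => h.trans hz

theorem isLaminar_range_bTrace : IsLaminar (Set.range (bTrace (n := n))) := by
  rintro _ ⟨s, rfl⟩ _ ⟨t, rfl⟩
  rcases bTrace_subsingleton_or_eq_setOf_prefix s with hs | ⟨x, hx⟩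
  · exact (hs.subset_or_disjoint _).imp id .inr
  rcases bTrace_subsingleton_or_eq_setOf_prefix t with ht | ⟨x', hx'⟩
  · exact .inr ((ht.subset_or_disjoint _).imp id fun h => h.symm)
  · rw [hx, hx']
    exact setOf_prefix_nested x x'

end Gn

open Gn in
theorem stmt13_general (n : ℕ) (S : Set (VGn n))
    (hS : ∀ y z : Wn n, y ≠ z → ∃ s ∈ S, (Gn n).dist (vb y) s ≠ (Gn n).dist (vb z) s) :
    2 ^ n - 1 ≤ S.ncard := by
  have hsep : IsSeparating (bTrace '' S) Set.univ := by
    rintro y - z - hyz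
    obtain ⟨s, hs, hdist⟩ := hS y z hyz
    exact ⟨bTrace s, Set.mem_image_of_mem _ hs, mt (dist_vb_eq_of_mem_bTrace_iff s) hdist⟩
  have hlam : IsLaminar (bTrace '' S) :=
    isLaminar_range_bTrace.mono (Set.image_subset_range _ _)
  have hcard := hlam.ncard_le_ncard_add_one (S.toFinite.image _) Set.finite_univ hsep
  rw [Set.ncard_univ, card_Wn] at hcard
  have himage := Set.ncard_image_le (f := bTrace) S.toFinite
  omega

/-- For `n ≥ 1`, every resolving set in `G_n` for `B = {b_y : y ∈ W_n}` has at least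
`2 ^ n - 1` elements. -/
theorem stmt13 (n : ℕ) (hn : 1 ≤ n) (S : Set (VGn n))
    (hS : ∀ y z : Wn n, y ≠ z → ∃ s ∈ S, (Gn n).dist (vb y) s ≠ (Gn n).dist (vb z) s) :
    2 ^ n - 1 ≤ S.ncard :=
  stmt13_general n S hS
end

section
/- For every integer n ≥ 1, let P = {a_x : x ∈ L_n, |x| < n} ∪ {d_x : x ∈ L_n, |x| < n}. If u and u′ are distinct vertices of G_n with dist(u, p) = dist(u′, p) for every p ∈ P, then there exists a binary word z of length n−1 such that either {u, u′} = {b_{z0}, b_{z1}} or {u, u′} = {c_{z0}, c_{z1}}, where z0 and z1 denote z followed by the bit 0 or 1 respectively. -/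
/-!
Exchanging `a_x ↔ d_x` and `b_y ↔ c_y` is an automorphism of `G_n` that preserves `P`, so the
`d`- and `c`-vertices behave like the `a`- and `b`-vertices. The distances to `a_ε` and `d_ε`
already tell the four kinds of vertices apart, so `u` and `u'` are of the same kind.

For `y ∈ W_n`, `dist(b_y, a_x)` is `1` if `x` is a prefix of `y` and `3` otherwise; for
`|x| = n > |p|`, `dist(a_x, a_p) = 2` iff `p` is a prefix of `x` (and vertices of `P` are
told apart by distance `0`). So `u`, `u'` have the same prefixes of length `< n` ending in `1`,
which forces the two words to agree up to the last letter. For words of `L_n` the last letter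
is `1`, so two `a`-vertices (or two `d`-vertices) would coincide.
-/

namespace SimpleGraph

variable {V W : Type*} {G : SimpleGraph V} {G' : SimpleGraph W}

theorem Hom.edist_le (f : G →g G') (u v : V) : G'.edist (f u) (f v) ≤ G.edist u v :=
  le_iInf fun p => (p.map f).edist_le.trans_eq (by rw [Walk.length_map])

theorem Iso.edist_map (f : G ≃g G') (u v : V) : G'.edist (f u) (f v) = G.edist u v := by
  refine le_antisymm (f.toHom.edist_le u v) ?_
  simpa using f.symm.toHom.edist_le (f u) (f v)

theorem Iso.dist_map (f : G ≃g G') (u v : V) : G'.dist (f u) (f v) = G.dist u v :=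
  congrArg ENat.toNat (f.edist_map u v)

theorem Connected.dist_eq_two_iff (hG : G.Connected) {u v : V} :
    G.dist u v = 2 ↔ u ≠ v ∧ ¬G.Adj u v ∧ (G.commonNeighbors u v).Nonempty := by
  rw [← edist_eq_two_iff, ← (hG u v).coe_dist_eq_edist]
  exact Nat.cast_inj.symm

theorem Connected.two_lt_dist_iff (hG : G.Connected) {u v : V} :
    2 < G.dist u v ↔ u ≠ v ∧ ¬G.Adj u v ∧ G.commonNeighbors u v = ∅ := by
  rw [← two_lt_edist_iff, ← (hG u v).coe_dist_eq_edist]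
  exact Nat.cast_lt.symm

end SimpleGraph

namespace List

theorem dropLast_eq_of_forall_prefix_iff {w w' : List Bool} (hlen : w.length = w'.length)
    (H : ∀ x : List Bool, x.length < w.length → x.getLast? = some true →
      (x <+: w ↔ x <+: w')) :
    w.dropLast = w'.dropLast := by
  induction w generalizing w' with
  | nil => rw [eq_nil_of_length_eq_zero hlen.symm]
  | cons a w ih =>
    obtain _ | ⟨a', w'⟩ := w'
    · simp at hlen
    rcases eq_or_ne w [] with rfl | hw
    · rw [eq_nil_of_length_eq_zero (l := w') (by simpa using hlen.symm)]
      rfl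
    have hw' : w' ≠ [] := by rintro rfl; simp_all
    have ha : a = a' := by
      -- otherwise `[true]` is a prefix of exactly one of the two words
      have := H [true] (by simpa using length_pos_of_ne_nil hw) rfl
      cases a <;> cases a' <;> simp_all
    subst ha
    rw [dropLast_cons_of_ne_nil hw, dropLast_cons_of_ne_nil hw', ih (by simpa using hlen)]
    intro x hx hlast
    simpa using H (a :: x) (by simpa using hx) (by simp [getLast?_cons, hlast])

end List

namespace Gn

open SimpleGraph

variable {n : ℕ}

def nil : Ln n := ⟨[], by simp⟩

def extend (x : Ln n) : Wn n :=
  ⟨x.1 ++ List.replicate (n - x.1.length) false, by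
    simp only [List.length_append, List.length_replicate]; have := x.2.1; omega⟩

theorem prefix_extend (x : Ln n) : x.1 <+: (extend x).1 := List.prefix_append _ _

theorem exists_eq_vertex (v : VGn n) :
    (∃ x, v = va x) ∨ (∃ y, v = vb y) ∨ (∃ y, v = vc y) ∨ ∃ x, v = vd x := by
  rcases v with x | y | y | x
  exacts [.inl ⟨x, rfl⟩, .inr (.inl ⟨y, rfl⟩), .inr (.inr (.inl ⟨y, rfl⟩)),
    .inr (.inr (.inr ⟨x, rfl⟩))]

theorem adj_va_vb {x : Ln n} {y : Wn n} : (Gn n).Adj (va x) (vb y) ↔ x.1 <+: y.1 := Iff.rfl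

theorem adj_vb_vc (y z : Wn n) : (Gn n).Adj (vb y) (vc z) := trivial

theorem adj_vc_vd {y : Wn n} {x : Ln n} : (Gn n).Adj (vc y) (vd x) ↔ x.1 <+: y.1 := Iff.rfl

theorem connected : (Gn n).Connected := by
  rw [connected_iff_exists_forall_reachable]
  have hb (y y' : Wn n) : (Gn n).Reachable (vb y) (vb y') :=
    (adj_vb_vc y y).reachable.trans (adj_vb_vc y' y).symm.reachable
  refine ⟨vb (extend nil), fun v => ?_⟩
  obtain ⟨x, rfl⟩ | ⟨y, rfl⟩ | ⟨y, rfl⟩ | ⟨x, rfl⟩ := exists_eq_vertex v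
  · exact (hb _ _).trans (adj_va_vb.mpr (prefix_extend x)).symm.reachable
  · exact hb _ _
  · exact (adj_vb_vc _ y).reachable
  · exact (adj_vb_vc _ (extend x)).reachable.trans (adj_vc_vd.mpr (prefix_extend x)).reachable

def swap : Gn n ≃g Gn n where
  toFun := Sum.elim vd (Sum.elim vc (Sum.elim vb va))
  invFun := Sum.elim vd (Sum.elim vc (Sum.elim vb va))
  left_inv := by rintro (x | y | y | x) <;> rfl
  right_inv := by rintro (x | y | y | x) <;> rfl
  map_rel_iff' := by rintro (x | y | y | x) (x' | y' | y' | x') <;> exact Iff.rfl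

theorem dist_vd_vd (x x' : Ln n) : (Gn n).dist (vd x) (vd x') = (Gn n).dist (va x) (va x') :=
  swap.dist_map (va x) (va x')

theorem dist_vd_va (x x' : Ln n) : (Gn n).dist (vd x) (va x') = (Gn n).dist (va x) (vd x') :=
  swap.dist_map (va x) (vd x')

theorem dist_vc_vd (y : Wn n) (x : Ln n) :
    (Gn n).dist (vc y) (vd x) = (Gn n).dist (vb y) (va x) :=
  swap.dist_map (vb y) (va x)

theorem dist_vc_va (y : Wn n) (x : Ln n) :
    (Gn n).dist (vc y) (va x) = (Gn n).dist (vb y) (vd x) :=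
  swap.dist_map (vb y) (vd x)

theorem dist_vb_va_eq_one_iff {y : Wn n} {x : Ln n} :
    (Gn n).dist (vb y) (va x) = 1 ↔ x.1 <+: y.1 :=
  dist_eq_one_iff_adj

theorem dist_vb_va_nil (y : Wn n) : (Gn n).dist (vb y) (va nil) = 1 :=
  dist_vb_va_eq_one_iff.mpr List.nil_prefix

theorem dist_va_vd (x x' : Ln n) : (Gn n).dist (va x) (vd x') = 3 := by
  have hle : (Gn n).dist (va x) (vd x') ≤ 3 := dist_le <|
    .cons (adj_va_vb.mpr (prefix_extend x)) <| .cons (adj_vb_vc _ (extend x')) <|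
      .cons (adj_vc_vd.mpr (prefix_extend x')) .nil
  have hlt : 2 < (Gn n).dist (va x) (vd x') := by
    refine connected.two_lt_dist_iff.mpr ⟨by simp [va, vd], fun h => h, ?_⟩
    refine Set.eq_empty_of_forall_notMem fun w hw => ?_
    rw [mem_commonNeighbors] at hw
    rcases w with _ | _ | _ | _
    exacts [hw.1, hw.2, hw.1, hw.1]
  omega

theorem dist_va_va_nil_le (x : Ln n) : (Gn n).dist (va x) (va nil) ≤ 2 :=
  dist_le <| .cons (adj_va_vb.mpr (prefix_extend x)) <|
    .cons ((adj_va_vb (x := nil)).mpr List.nil_prefix).symm .nil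

theorem dist_va_va_eq_two_iff {x x' : Ln n} (hne : x ≠ x') :
    (Gn n).dist (va x) (va x') = 2 ↔ x.1 <+: x'.1 ∨ x'.1 <+: x.1 := by
  rw [connected.dist_eq_two_iff]
  constructor
  · rintro ⟨-, -, w, hw⟩
    rw [mem_commonNeighbors] at hw
    rcases w with _ | y | _ | _
    exacts [hw.1.elim, List.prefix_or_prefix_of_prefix hw.1 hw.2, hw.1.elim, hw.1.elim]
  · refine fun h => ⟨fun h' => hne (Sum.inl_injective h'), fun h => h, ?_⟩
    rcases h with h | h
    · exact ⟨vb (extend x'), adj_va_vb.mpr (h.trans (prefix_extend x')),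
        adj_va_vb.mpr (prefix_extend x')⟩
    · exact ⟨vb (extend x), adj_va_vb.mpr (prefix_extend x),
        adj_va_vb.mpr (h.trans (prefix_extend x))⟩

theorem dist_va_va_eq_two_iff_of_length_lt {x x' : Ln n} (hlt : x.1.length < x'.1.length) :
    (Gn n).dist (va x') (va x) = 2 ↔ x.1 <+: x'.1 := by
  rw [dist_va_va_eq_two_iff (by rintro rfl; exact hlt.false), or_iff_right]
  exact fun h => hlt.not_ge h.length_le

theorem exists_eq_of_dist_nil_eq {u u' : VGn n}
    (ha : (Gn n).dist u (va nil) = (Gn n).dist u' (va nil))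
    (hd : (Gn n).dist u (vd nil) = (Gn n).dist u' (vd nil)) :
    (∃ x x', u = va x ∧ u' = va x') ∨ (∃ y y', u = vb y ∧ u' = vb y') ∨
      (∃ y y', u = vc y ∧ u' = vc y') ∨ ∃ x x', u = vd x ∧ u' = vd x' := by
  obtain ⟨x, rfl⟩ | ⟨y, rfl⟩ | ⟨y, rfl⟩ | ⟨x, rfl⟩ := exists_eq_vertex u <;>
  obtain ⟨x', rfl⟩ | ⟨y', rfl⟩ | ⟨y', rfl⟩ | ⟨x', rfl⟩ := exists_eq_vertex u' <;>
  -- the profile (dist to `a_ε`, dist to `d_ε`) is `(≤ 2, 3)` on `a`, `(1, 2)` on `b`,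
  -- `(2, 1)` on `c` and `(3, ≤ 2)` on `d`
  simp only [dist_vd_vd, dist_vd_va, dist_vc_vd, dist_vc_va, dist_vb_va_nil, dist_vb_vd,
    dist_va_vd] at ha hd
  all_goals first
    | exact .inl ⟨_, _, rfl, rfl⟩
    | exact .inr (.inl ⟨_, _, rfl, rfl⟩)
    | exact .inr (.inr (.inl ⟨_, _, rfl, rfl⟩))
    | exact .inr (.inr (.inr ⟨_, _, rfl, rfl⟩))
    | omega
    | have := dist_va_va_nil_le x; have := dist_va_va_nil_le x'; omega

theorem eq_of_forall_dist_va_eq (hn : 1 ≤ n) {x₁ x₂ : Ln n}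
    (h : ∀ x : Ln n, x.1.length < n →
      (Gn n).dist (va x₁) (va x) = (Gn n).dist (va x₂) (va x)) :
    x₁ = x₂ := by
  by_contra hne
  have length_eq (x x' : Ln n) (hxx' : x ≠ x') (hdist : ∀ p : Ln n, p.1.length < n →
      (Gn n).dist (va x) (va p) = (Gn n).dist (va x') (va p)) : x.1.length = n := by
    refine le_antisymm x.2.1 (not_lt.mp fun hlt => ?_)
    have := hdist x hlt
    rw [dist_self] at this
    exact (connected.pos_dist_of_ne fun h => hxx' (Sum.inl_injective h).symm).ne this
  have hx₁ := length_eq x₁ x₂ hne h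
  have hx₂ := length_eq x₂ x₁ (Ne.symm hne) fun p hp => (h p hp).symm
  have last (x : Ln n) (hx : x.1.length = n) : x.1.getLast? = some true :=
    x.2.2.resolve_left fun h0 => by simp [h0] at hx; omega
  have hdrop : x₁.1.dropLast = x₂.1.dropLast := by
    refine List.dropLast_eq_of_forall_prefix_iff (hx₁.trans hx₂.symm) fun p hp hlast => ?_
    let q : Ln n := ⟨p, by omega, .inr hlast⟩
    rw [← dist_va_va_eq_two_iff_of_length_lt (x := q) hp,
      ← dist_va_va_eq_two_iff_of_length_lt (x := q) (hp.trans_eq (hx₁.trans hx₂.symm)),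
      h q (hp.trans_eq hx₁)]
  exact hne <| Subtype.ext <| by
    rw [← List.dropLast_append_getLast? true (last x₁ hx₁),
      ← List.dropLast_append_getLast? true (last x₂ hx₂), hdrop]

theorem dropLast_eq_of_forall_dist_vb_va_eq {y₁ y₂ : Wn n}
    (h : ∀ x : Ln n, x.1.length < n →
      (Gn n).dist (vb y₁) (va x) = (Gn n).dist (vb y₂) (va x)) :
    y₁.1.dropLast = y₂.1.dropLast := by
  refine List.dropLast_eq_of_forall_prefix_iff (y₁.2.trans y₂.2.symm) fun p hp hlast => ?_
  let q : Ln n := ⟨p, by omega, .inr hlast⟩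
  rw [← dist_vb_va_eq_one_iff (x := q), ← dist_vb_va_eq_one_iff (x := q),
    h q (hp.trans_eq y₁.2)]

end Gn

namespace Wn

theorem exists_pair_of_dropLast_eq {n : ℕ} (hn : 1 ≤ n) {y y' : Wn n} (hne : y ≠ y')
    (h : y.1.dropLast = y'.1.dropLast) :
    ∃ (z : List Bool) (y0 y1 : Wn n), z.length = n - 1 ∧ y0.1 = z ++ [false] ∧
      y1.1 = z ++ [true] ∧ ({y, y'} : Set (Wn n)) = {y0, y1} := by
  have snoc (w : Wn n) : ∃ b, w.1 = w.1.dropLast ++ [b] :=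
    ⟨_, (List.dropLast_append_getLast (List.ne_nil_of_length_pos (by omega))).symm⟩
  obtain ⟨b, hb⟩ := snoc y
  obtain ⟨b', hb'⟩ := snoc y'
  rw [← h] at hb'
  have hbb : b ≠ b' := fun hbb => hne (Subtype.ext (by rw [hb, hb', hbb]))
  have hz : y.1.dropLast.length = n - 1 := by simp [y.2]
  cases b <;> cases b'
  · exact absurd rfl hbb
  · exact ⟨_, y, y', hz, hb, hb', rfl⟩
  · exact ⟨_, y', y, hz, hb', hb, Set.pair_comm y y'⟩
  · exact absurd rfl hbb

end Wn

open Gn in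
/-- For `n ≥ 1`, let `P = {a_x : |x| < n} ∪ {d_x : |x| < n}`. If distinct vertices
`u ≠ u'` of `G_n` have equal distances to every vertex of `P`, then there is a word `z`
of length `n - 1` such that `{u, u'} = {b_{z0}, b_{z1}}` or `{u, u'} = {c_{z0}, c_{z1}}`. -/
theorem stmt14 (n : ℕ) (hn : 1 ≤ n) (u u' : VGn n) (hne : u ≠ u')
    (h : ∀ x : Ln n, x.1.length < n →
      (Gn n).dist u (va x) = (Gn n).dist u' (va x) ∧
      (Gn n).dist u (vd x) = (Gn n).dist u' (vd x)) :
    ∃ (z : List Bool) (y0 y1 : Wn n), z.length = n - 1 ∧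
      y0.1 = z ++ [false] ∧ y1.1 = z ++ [true] ∧
      (({u, u'} : Set (VGn n)) = {vb y0, vb y1} ∨
       ({u, u'} : Set (VGn n)) = {vc y0, vc y1}) := by
  have hnil : (nil : Ln n).1.length < n := hn
  obtain ⟨x, x', rfl, rfl⟩ | ⟨y, y', rfl, rfl⟩ | ⟨y, y', rfl, rfl⟩ |
      ⟨x, x', rfl, rfl⟩ := exists_eq_of_dist_nil_eq (h nil hnil).1 (h nil hnil).2
  · exact absurd (eq_of_forall_dist_va_eq hn fun p hp => (h p hp).1) (ne_of_apply_ne va hne)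
  · obtain ⟨z, y0, y1, hz, h0, h1, hpair⟩ := Wn.exists_pair_of_dropLast_eq hn
      (ne_of_apply_ne vb hne) (dropLast_eq_of_forall_dist_vb_va_eq fun p hp => (h p hp).1)
    refine ⟨z, y0, y1, hz, h0, h1, .inl ?_⟩
    simpa only [Set.image_pair] using congrArg (vb '' ·) hpair
  · obtain ⟨z, y0, y1, hz, h0, h1, hpair⟩ := Wn.exists_pair_of_dropLast_eq hn
      (ne_of_apply_ne vc hne) (dropLast_eq_of_forall_dist_vb_va_eq fun p hp => by
        simpa only [dist_vc_vd] using (h p hp).2)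
    refine ⟨z, y0, y1, hz, h0, h1, .inr ?_⟩
    simpa only [Set.image_pair] using congrArg (vc '' ·) hpair
  · refine absurd (eq_of_forall_dist_va_eq hn fun p hp => ?_) (ne_of_apply_ne vd hne)
    simpa only [dist_vd_vd] using (h p hp).2
end

section
/- For integers n and k with 1 ≤ k ≤ n−2, the minimum size of a resolving set for the entire vertex set of G_{n,k} (that is, the metric dimension of G_{n,k}) equals n−1. -/
/-- Vertex set of the graph `G_{n,k}`: vertices `v_i` for `i ∈ [n]` (as `Sum.inl i`)
and `w_A` for `A` a `k`-element subset of `[n]` (as `Sum.inr A`). -/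
abbrev Vnk (n k : ℕ) := Fin n ⊕ {A : Finset (Fin n) // A.card = k}

/-- The graph `G_{n,k}`: edges `w_A w_B` for all distinct `k`-subsets `A, B`,
and `v_i w_A` whenever `i ∉ A`. -/
def Gnk (n k : ℕ) : SimpleGraph (Vnk n k) where
  Adj u v :=
    match u, v with
    | Sum.inl _, Sum.inl _ => False
    | Sum.inl i, Sum.inr A => i ∉ A.1
    | Sum.inr A, Sum.inl i => i ∉ A.1
    | Sum.inr A, Sum.inr B => A ≠ B
  symm := by
    constructor
    rintro (i | A) (j | B) h
    · exact h
    · exact h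
    · exact h
    · exact fun e => h e.symm
  loopless := by
    constructor
    rintro (i | A) h
    · exact h
    · exact h rfl

/-!
The vertices `v_i`, `i ≠ j`, resolve `G_{n,k}`: `w_A` lies at distance 1 or 2 from `v_i` according
as `i ∉ A` or `i ∈ A`, so they read off `A` away from `j` (and `#A = k` recovers `j ∈ A`), while `v_j`
is separated from `w_A` by any `v_m` with `m ∉ A ∪ {j}`.
Conversely, `w_B` lies at distance 1 from every other `w_A`, so a set with `p` vertices `v_i` and
`q` vertices `w_A` only sees the trace of `B` on those `p` coordinates. Some trace is shared by at
least `n - p` of the `k`-sets, so if `p + q ≤ n - 2` two of them outside the set are not separated.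
-/

open Finset

theorem Nat.le_choose_of_pos_of_lt {m s : ℕ} (hs : 0 < s) (hsm : s < m) : m ≤ m.choose s := by
  induction m generalizing s with
  | zero => omega
  | succ m ih =>
    obtain ⟨r, rfl⟩ := Nat.exists_eq_add_of_le' hs
    rw [Nat.choose_succ_succ']
    rcases r.eq_zero_or_pos with rfl | hr
    · simp
    · have := ih hr (by omega)
      have := Nat.choose_pos (n := m) (k := r + 1) (by omega)
      omega

namespace Finset

variable {α : Type*} [DecidableEq α]

theorem eq_of_card_eq_of_forall_ne_mem_iff {A B : Finset α} (j : α) (hAB : #A = #B)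
    (h : ∀ m ≠ j, m ∈ A ↔ m ∈ B) : A = B := by
  have he : A.erase j = B.erase j := by
    ext m
    simp only [mem_erase]
    exact and_congr_right (h m)
  by_cases hA : j ∈ A <;> by_cases hB : j ∈ B
  · rw [← insert_erase hA, he, insert_erase hB]
  · have := card_erase_add_one hA
    rw [he, erase_eq_of_notMem hB] at this
    omega
  · have := card_erase_add_one hB
    rw [← he, erase_eq_of_notMem hA] at this
    omega
  · rwa [erase_eq_of_notMem hA, erase_eq_of_notMem hB] at he

variable [Fintype α]

theorem exists_card_eq_disjoint {k : ℕ} (s : Finset α) (h : k + #s ≤ Fintype.card α) :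
    ∃ B : Finset α, #B = k ∧ Disjoint B s := by
  obtain ⟨B, hB, hcard⟩ := exists_subset_card_eq (s := sᶜ) (n := k) (by rw [card_compl]; omega)
  exact ⟨B, hcard, subset_compl_iff_disjoint_right.mp hB⟩

theorem exists_le_card_filter_inter_eq (U : Finset α) {k : ℕ} (hk : 0 < k)
    (hkα : k < Fintype.card α) (hU : #U + 2 ≤ Fintype.card α) :
    ∃ R, Fintype.card α - #U ≤ #{B ∈ univ.powersetCard k | B ∩ U = R} := by
  set t := Fintype.card α - #U
  set s := min k (t - 1)
  obtain ⟨R, hRU, hR⟩ := exists_subset_card_eq (s := U) (n := k - s) (by omega)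
  refine ⟨R, ?_⟩
  -- The sets `R ∪ C`, `C` an `s`-subset of `Uᶜ`, all have trace `R` on `U`.
  calc t ≤ t.choose s := Nat.le_choose_of_pos_of_lt (by omega) (by omega)
    _ = #(Uᶜ.powersetCard s) := by rw [card_powersetCard, card_compl]
    _ ≤ _ := by
      have hRC : ∀ C ∈ Uᶜ.powersetCard s, Disjoint R C := fun C hC =>
        disjoint_of_subset_left hRU (subset_compl_iff_disjoint_left.mp (mem_powersetCard.mp hC).1)
      refine card_le_card_of_injOn (R ∪ ·) (fun C hC => ?_) (fun C₁ hC₁ C₂ hC₂ he => ?_)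
      · obtain ⟨hCU, hCs⟩ := mem_powersetCard.mp hC
        simp only [mem_coe, mem_filter, mem_powersetCard, subset_univ, true_and]
        refine ⟨by rw [card_union_of_disjoint (hRC C hC)]; omega, ?_⟩
        rw [union_inter_distrib_right, inter_eq_left.mpr hRU,
          disjoint_iff_inter_eq_empty.mp (subset_compl_iff_disjoint_right.mp hCU), union_empty]
      · rw [← union_sdiff_cancel_left (hRC C₁ hC₁), ← union_sdiff_cancel_left (hRC C₂ hC₂)]
        exact congrArg (· \ R) he

theorem exists_ne_card_eq_inter_eq_notMem (U : Finset α) (W : Finset (Finset α)) {k : ℕ}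
    (hk : 0 < k) (hkα : k < Fintype.card α) (hUW : #U + #W + 2 ≤ Fintype.card α) :
    ∃ B₁ B₂, B₁ ≠ B₂ ∧ #B₁ = k ∧ #B₂ = k ∧ B₁ ∉ W ∧ B₂ ∉ W ∧ B₁ ∩ U = B₂ ∩ U := by
  obtain ⟨R, hR⟩ := exists_le_card_filter_inter_eq U hk hkα (by omega)
  set 𝓑 := {B ∈ (univ : Finset α).powersetCard k | B ∩ U = R}
  have h2 := le_card_sdiff W 𝓑
  obtain ⟨B₁, hB₁, B₂, hB₂, hne⟩ := one_lt_card.mp (show 1 < #(𝓑 \ W) by omega)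
  simp only [𝓑, mem_sdiff, mem_filter, mem_powersetCard, subset_univ, true_and] at hB₁ hB₂
  exact ⟨B₁, B₂, hne, hB₁.1.1, hB₂.1.1, hB₁.2, hB₂.2, hB₁.1.2.trans hB₂.1.2.symm⟩

end Finset

theorem SimpleGraph.dist_eq_two_of_adj_of_adj_s18 {V : Type*} {G : SimpleGraph V} {u v w : V}
    (huv : u ≠ v) (hnadj : ¬G.Adj u v) (huw : G.Adj u w) (hwv : G.Adj w v) : G.dist u v = 2 := by
  rw [SimpleGraph.dist, edist_eq_two_iff.mpr ⟨huv, hnadj, w, huw, hwv.symm⟩]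
  rfl

def SimpleGraph.IsResolvingSet {V : Type*} (G : SimpleGraph V) (S : Set V) : Prop :=
  ∀ u u', u ≠ u' → ∃ s ∈ S, G.dist u s ≠ G.dist u' s

namespace Gnk

variable {n k : ℕ}

theorem dist_inr_inr {A B : {A : Finset (Fin n) // A.card = k}} (h : A ≠ B) :
    (Gnk n k).dist (.inr A) (.inr B) = 1 :=
  SimpleGraph.dist_eq_one_iff_adj.mpr h

theorem dist_inr_inl (hkn : k < n) (A : {A : Finset (Fin n) // A.card = k}) (i : Fin n) :
    (Gnk n k).dist (.inr A) (.inl i) = if i ∈ A.1 then 2 else 1 := by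
  split_ifs with hi
  · obtain ⟨B, hB, hiB⟩ := exists_card_eq_disjoint {i} (by simpa using hkn)
    have hiB : i ∉ B := disjoint_singleton_right.mp hiB
    exact SimpleGraph.dist_eq_two_of_adj_of_adj_s18 (w := .inr ⟨B, hB⟩) (by simp) (· hi)
      (fun e => hiB (by simpa [e] using hi)) hiB
  · exact SimpleGraph.dist_eq_one_iff_adj.mpr hi

theorem dist_inl_inl (hkn : k + 2 ≤ n) {i j : Fin n} (h : i ≠ j) :
    (Gnk n k).dist (.inl i) (.inl j) = 2 := by
  obtain ⟨B, hB, hijB⟩ := exists_card_eq_disjoint (k := k) {i, j} <| by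
    have := card_le_two (a := i) (b := j)
    simp only [Fintype.card_fin]
    omega
  simp only [disjoint_insert_right, disjoint_singleton_right] at hijB
  exact SimpleGraph.dist_eq_two_of_adj_of_adj_s18 (w := .inr ⟨B, hB⟩) (by simpa) id hijB.1 hijB.2

theorem isResolvingSet_image_inl_compl (hkn : k + 2 ≤ n) (j : Fin n) :
    (Gnk n k).IsResolvingSet (.inl '' {j}ᶜ) := by
  have mem_S {i : Fin n} (hi : i ≠ j) : (.inl i : Vnk n k) ∈ .inl '' {j}ᶜ := ⟨i, hi, rfl⟩
  have separates_inl_inr (i : Fin n) (A : {A : Finset (Fin n) // A.card = k}) :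
      ∃ s ∈ .inl '' {j}ᶜ, (Gnk n k).dist (.inl i) s ≠ (Gnk n k).dist (.inr A) s := by
    by_cases hi : i = j
    · obtain ⟨m, -, hm⟩ := exists_mem_notMem_of_card_lt_card (s := insert j A.1) (t := univ) <| by
        have := card_insert_le j A.1
        simp only [card_univ, Fintype.card_fin, A.2] at this ⊢
        omega
      obtain ⟨hmA, hm⟩ := not_or.mp (mem_insert.not.mp hm)
      refine ⟨.inl m, mem_S hmA, ?_⟩
      rw [dist_inl_inl hkn (hi ▸ Ne.symm hmA), dist_inr_inl (by omega), if_neg hm]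
      omega
    · refine ⟨.inl i, mem_S hi, ?_⟩
      rw [SimpleGraph.dist_self, dist_inr_inl (by omega)]
      split_ifs <;> omega
  rintro (i | A) (i' | A') hne
  · have hii' : i ≠ i' := fun e => hne (e ▸ rfl)
    by_cases hi : i = j
    · refine ⟨.inl i', mem_S (hi ▸ hii'.symm), ?_⟩
      rw [dist_inl_inl hkn hii', SimpleGraph.dist_self]
      omega
    · refine ⟨.inl i, mem_S hi, ?_⟩
      rw [dist_inl_inl hkn hii'.symm, SimpleGraph.dist_self]
      omega
  · exact separates_inl_inr i A'
  · obtain ⟨s, hs, h⟩ := separates_inl_inr i' A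
    exact ⟨s, hs, h.symm⟩
  · obtain ⟨m, hm, hmA⟩ : ∃ m ≠ j, (m ∈ A.1 ↔ m ∉ A'.1) := by
      by_contra! h
      refine hne (congrArg _ (Subtype.ext (eq_of_card_eq_of_forall_ne_mem_iff j
        (A.2.trans A'.2.symm) fun m hm => ?_)))
      have := h m hm
      tauto
    refine ⟨.inl m, mem_S hm, ?_⟩
    rw [dist_inr_inl (by omega), dist_inr_inl (by omega)]
    split_ifs <;> tauto

theorem sub_one_le_ncard_of_isResolvingSet (hk : 0 < k) (hkn : k + 2 ≤ n) {S : Set (Vnk n k)}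
    (hS : (Gnk n k).IsResolvingSet S) : n - 1 ≤ S.ncard := by
  classical
  by_contra! hlt
  set U := S.toFinset.toLeft
  set W := S.toFinset.toRight.image Subtype.val
  have hUW : #U + #W + 2 ≤ Fintype.card (Fin n) := by
    have h₁ : #U + #S.toFinset.toRight = #S.toFinset := card_toLeft_add_card_toRight
    have h₂ : #W ≤ #S.toFinset.toRight := card_image_le
    rw [Set.ncard_eq_toFinset_card'] at hlt
    rw [Fintype.card_fin]
    omega
  obtain ⟨B₁, B₂, hne, hB₁, hB₂, hB₁W, hB₂W, htrace⟩ :=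
    exists_ne_card_eq_inter_eq_notMem U W hk (by rw [Fintype.card_fin]; omega) hUW
  obtain ⟨s, hs, hdist⟩ := hS (.inr ⟨B₁, hB₁⟩) (.inr ⟨B₂, hB₂⟩) (by simpa using hne)
  rcases s with i | A
  · have hiU : i ∈ U := by simpa [U] using hs
    rw [dist_inr_inl (by omega), dist_inr_inl (by omega)] at hdist
    have : i ∈ B₁ ↔ i ∈ B₂ := by simpa [hiU] using congrArg (i ∈ ·) htrace
    simp [this] at hdist
  · have hA : A.1 ∈ W := mem_image_of_mem _ (by simpa [U] using hs)
    rw [dist_inr_inr, dist_inr_inr] at hdist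
    exacts [hdist rfl, fun e => hB₂W (by simpa [← e] using hA),
      fun e => hB₁W (by simpa [← e] using hA)]

end Gnk

/-- For `1 ≤ k ≤ n - 2`, the metric dimension of `G_{n,k}` — the minimum size of a
resolving set for the entire vertex set — equals `n - 1`. -/
theorem stmt18 (n k : ℕ) (hk : 1 ≤ k) (hkn : k ≤ n - 2) :
    IsLeast {m : ℕ | ∃ S : Set (Vnk n k), S.ncard = m ∧
      ∀ u u' : Vnk n k, u ≠ u' →
        ∃ s ∈ S, (Gnk n k).dist u s ≠ (Gnk n k).dist u' s} (n - 1) := by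
  have hkn' : k + 2 ≤ n := by omega
  refine ⟨⟨.inl '' {⟨0, by omega⟩}ᶜ, ?_, Gnk.isResolvingSet_image_inl_compl hkn' _⟩, ?_⟩
  · rw [Set.ncard_image_of_injective _ Sum.inl_injective, Set.ncard_compl, Set.ncard_singleton,
      Nat.card_eq_fintype_card, Fintype.card_fin]
  · rintro m ⟨S, rfl, hS⟩
    exact Gnk.sub_one_le_ncard_of_isResolvingSet hk hkn' hS
end
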